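/- arXiv:2605.12425 — 2 statements merged into one kernel-verified Lean document; each statement's English description precedes it below -/
import Mathlib

section
/- For every positive integer n, the fitness landscape represented by the VCSP-instance C_{≤n} on 4n+1 Boolean variables (the star of 2n triangles with weights as specified) has a strict ascent of length 10·2^n − 9 that starts at the all-zeros assignment and ends at the assignment where the centre variable equals 1 and all other variables equal 0. -/
def b2i (t : Bool) : ℤ := if t then 1 else 0

/-- Variables of `C_{≤n}`: the centre variable (`none`) plus, for each of the `n`
gadgets, four variables `(1,k),(2,k),(3,k),(4,k)` (here `some (k, i)` with `i : Fin 4`,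
where `i = 0,1,2,3` correspond to `1,2,3,4` and `k : Fin n` corresponds to `k+1`).
This is a set of `4n + 1` variables. -/
abbrev StarVar (n : ℕ) := Option (Fin n × Fin 4)

/-- Fitness function of the star-of-gadgets instance `C_{≤n}`. -/
def starF (n : ℕ) (x : StarVar n → Bool) : ℤ :=
  11 ^ n * b2i (x none) +
    ∑ k : Fin n, 11 ^ (k : ℕ) *
      (b2i (x (some (k, 0))) + b2i (x (some (k, 1))) + 3 * b2i (x (some (k, 2)))
        + b2i (x (some (k, 3)))
        - 2 * b2i (x none) * b2i (x (some (k, 0)))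
        - 4 * b2i (x none) * b2i (x (some (k, 1)))
        - 4 * b2i (x none) * b2i (x (some (k, 2)))
        - 2 * b2i (x none) * b2i (x (some (k, 3)))
        + 2 * b2i (x (some (k, 0))) * b2i (x (some (k, 1)))
        - 2 * b2i (x (some (k, 2))) * b2i (x (some (k, 3))))

/-- Adjacency: two assignments differ in exactly one variable. -/
def Adjacent {V : Type*} (x y : V → Bool) : Prop :=
  ∃ u, x u ≠ y u ∧ ∀ v, v ≠ u → x v = y v

/-! ### Auxiliary machinery -/

/-- A gadget assignment. -/
def qs (a b c d : Bool) : Fin 4 → Bool :=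
  fun i => if i = 0 then a else if i = 1 then b else if i = 2 then c else d

/-- Value of one gadget with assignment `s`, given centre value `t`. -/
def gval (s : Fin 4 → Bool) (t : Bool) : ℤ :=
  b2i (s 0) + b2i (s 1) + 3 * b2i (s 2) + b2i (s 3)
    - 2 * b2i t * b2i (s 0) - 4 * b2i t * b2i (s 1)
    - 4 * b2i t * b2i (s 2) - 2 * b2i t * b2i (s 3)
    + 2 * b2i (s 0) * b2i (s 1) - 2 * b2i (s 2) * b2i (s 3)

/-- Extend an assignment on `StarVar n` to `StarVar (n+1)` with top gadget `s`. -/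
def lift (n : ℕ) (s : Fin 4 → Bool) (x : StarVar n → Bool) : StarVar (n+1) → Bool :=
  fun v => Option.elim v (x none)
    (fun p => if h : (p.1 : ℕ) < n then x (some (⟨p.1, h⟩, p.2)) else s p.2)

lemma lift_none (n : ℕ) (s : Fin 4 → Bool) (x : StarVar n → Bool) :
    lift n s x none = x none := rfl

lemma lift_castSucc (n : ℕ) (s : Fin 4 → Bool) (x : StarVar n → Bool)
    (k : Fin n) (i : Fin 4) :
    lift n s x (some (Fin.castSucc k, i)) = x (some (k, i)) := by
  simp [lift]

lemma lift_last (n : ℕ) (s : Fin 4 → Bool) (x : StarVar n → Bool) (i : Fin 4) :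
    lift n s x (some (Fin.last n, i)) = s i := by
  simp [lift]

lemma starF_lift (n : ℕ) (s : Fin 4 → Bool) (x : StarVar n → Bool) :
    starF (n+1) (lift n s x) =
      starF n x + 11 ^ n * (10 * b2i (x none) + gval s (x none)) := by
  unfold starF gval
  rw [Fin.sum_univ_castSucc]
  simp only [lift_castSucc, lift_last, lift_none, Fin.coe_castSucc, Fin.val_last]
  ring

lemma starF_false (n : ℕ) : starF n (fun _ => false) = 0 := by
  simp [starF, b2i]

lemma starF_true (n : ℕ) : starF n (fun v => decide (v = none)) = 11 ^ n := by
  simp [starF, b2i]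

lemma starF_lift_false (n : ℕ) (s : Fin 4 → Bool) :
    starF (n+1) (lift n s (fun _ => false)) = 11 ^ n * gval s false := by
  rw [starF_lift, starF_false]; simp [b2i]

lemma starF_lift_true (n : ℕ) (s : Fin 4 → Bool) :
    starF (n+1) (lift n s (fun v => decide (v = none)))
      = 11 ^ n * (10 + gval s true) + 11 ^ n := by
  rw [starF_lift, starF_true]; simp [b2i]; ring

lemma starF_lift_c (n : ℕ) (s : Fin 4 → Bool) (c : ℤ)
    (hc : ∀ b, 10 * b2i b + gval s b = c) (x : StarVar n → Bool) :
    starF (n+1) (lift n s x) = starF n x + 11 ^ n * c := by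
  rw [starF_lift, hc]

lemma adjacent_lift (n : ℕ) (s : Fin 4 → Bool) (x y : StarVar n → Bool)
    (h : Adjacent x y) : Adjacent (lift n s x) (lift n s y) := by
  obtain ⟨u, hu, hv⟩ := h
  refine ⟨Option.map (fun p => (Fin.castSucc p.1, p.2)) u, ?_, ?_⟩
  · match u with
    | none => exact hu
    | some (k, i) =>
      simpa only [Option.map_some, lift_castSucc] using hu
  · intro v hvne
    match v with
    | none =>
      show x none = y none
      apply hv
      intro h'
      subst h'
      exact hvne rfl
    | some (k, i) =>
      by_cases hk : (k : ℕ) < n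
      · show (if h : (k : ℕ) < n then x (some (⟨k, h⟩, i)) else s i)
            = (if h : (k : ℕ) < n then y (some (⟨k, h⟩, i)) else s i)
        rw [dif_pos hk, dif_pos hk]
        apply hv
        intro h'
        apply hvne
        subst h'
        simp only [Option.map_some]
        have hk2 : k = Fin.castSucc ⟨(k : ℕ), hk⟩ := by ext; simp
        rw [← hk2]
      · show (if h : (k : ℕ) < n then x (some (⟨k, h⟩, i)) else s i)
            = (if h : (k : ℕ) < n then y (some (⟨k, h⟩, i)) else s i)
        rw [dif_neg hk, dif_neg hk]

lemma adjacent_top (n : ℕ) (x : StarVar n → Bool) (s s' : Fin 4 → Bool) (i : Fin 4)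
    (hne : s i ≠ s' i) (he : ∀ j, j ≠ i → s j = s' j) :
    Adjacent (lift n s x) (lift n s' x) := by
  refine ⟨some (Fin.last n, i), by simpa only [lift_last] using hne, ?_⟩
  intro v hv
  match v with
  | none => rfl
  | some (k, j) =>
    by_cases hk : (k : ℕ) < n
    · show (if h : (k : ℕ) < n then x (some (⟨k, h⟩, j)) else s j)
          = (if h : (k : ℕ) < n then x (some (⟨k, h⟩, j)) else s' j)
      rw [dif_pos hk, dif_pos hk]
    · have hkl : k = Fin.last n := by
        have := k.isLt
        ext
        simp only [Fin.val_last]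
        omega
      subst hkl
      have hj : j ≠ i := by
        intro h'; subst h'; exact hv rfl
      show (if h : (n : ℕ) < n then x (some (⟨n, h⟩, j)) else s j)
          = (if h : (n : ℕ) < n then x (some (⟨n, h⟩, j)) else s' j)
      rw [dif_neg (lt_irrefl n), dif_neg (lt_irrefl n)]
      exact he j hj

lemma adj_FT (n : ℕ) :
    Adjacent (fun _ : StarVar n => false) (fun v => decide (v = none)) := by
  refine ⟨none, by simp, fun v hv => ?_⟩
  match v with
  | none => exact absurd rfl hv
  | some p => simp

lemma adj_TF (n : ℕ) :
    Adjacent (fun v : StarVar n => decide (v = none)) (fun _ => false) := by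
  refine ⟨none, by simp, fun v hv => ?_⟩
  match v with
  | none => exact absurd rfl hv
  | some p => simp

lemma lift_zero_false (n : ℕ) (s : Fin 4 → Bool) (hs : ∀ i, s i = false) :
    lift n s (fun _ => false) = (fun _ => false) := by
  funext v
  match v with
  | none => rfl
  | some (k, i) =>
    show (if h : (k : ℕ) < n then false else s i) = false
    split
    · rfl
    · exact hs i

lemma lift_zero_true (n : ℕ) (s : Fin 4 → Bool) (hs : ∀ i, s i = false) :
    lift n s (fun v => decide (v = none)) = (fun v => decide (v = none)) := by
  funext v
  match v with
  | none => rfl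
  | some (k, i) =>
    show (if h : (k : ℕ) < n then decide ((some (⟨(k:ℕ), h⟩, i) : StarVar n) = none) else s i)
        = decide ((some (k, i) : StarVar (n+1)) = none)
    split
    · simp
    · simp [hs i]

/-- The recursive step: an ascent of length `2L+9` on `StarVar (n+1)` built from
an ascent `seq` of length `L` on `StarVar n`. -/
def stepFun (n L : ℕ) (seq : ℕ → StarVar n → Bool) : ℕ → StarVar (n+1) → Bool :=
  fun t =>
    if t = 0 then lift n (qs false false false false) (fun _ => false)
    else if t = 1 then lift n (qs false true false false) (fun _ => false)
    else if t = 2 then lift n (qs false true false true) (fun _ => false)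
    else if t ≤ 3 + L then lift n (qs false true true true) (seq (t - 3))
    else if t = 4 + L then lift n (qs true true true true) (fun v => decide (v = none))
    else if t = 5 + L then lift n (qs true true true true) (fun _ => false)
    else if t ≤ 6 + 2*L then lift n (qs true true true false) (seq (t - (6+L)))
    else if t = 7 + 2*L then lift n (qs true false true false) (fun v => decide (v = none))
    else if t = 8 + 2*L then lift n (qs false false true false) (fun v => decide (v = none))
    else lift n (qs false false false false) (fun v => decide (v = none))

section evals
variable (n L : ℕ) (seq : ℕ → StarVar n → Bool)

lemma sf0 : stepFun n L seq 0 = lift n (qs false false false false) (fun _ => false) := by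
  unfold stepFun; rw [if_pos rfl]

lemma sf1 : stepFun n L seq 1 = lift n (qs false true false false) (fun _ => false) := by
  unfold stepFun; rw [if_neg (by omega), if_pos rfl]

lemma sf2 : stepFun n L seq 2 = lift n (qs false true false true) (fun _ => false) := by
  unfold stepFun; rw [if_neg (by omega), if_neg (by omega), if_pos rfl]

lemma sf3 {t : ℕ} (h1 : 3 ≤ t) (h2 : t ≤ 3 + L) :
    stepFun n L seq t = lift n (qs false true true true) (seq (t - 3)) := by
  unfold stepFun
  rw [if_neg (by omega), if_neg (by omega), if_neg (by omega), if_pos h2]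

lemma sf4 : stepFun n L seq (4 + L)
    = lift n (qs true true true true) (fun v => decide (v = none)) := by
  unfold stepFun
  rw [if_neg (by omega), if_neg (by omega), if_neg (by omega), if_neg (by omega), if_pos rfl]

lemma sf5 : stepFun n L seq (5 + L) = lift n (qs true true true true) (fun _ => false) := by
  unfold stepFun
  rw [if_neg (by omega), if_neg (by omega), if_neg (by omega), if_neg (by omega),
    if_neg (by omega), if_pos rfl]

lemma sf6 {t : ℕ} (h1 : 6 + L ≤ t) (h2 : t ≤ 6 + 2*L) :
    stepFun n L seq t = lift n (qs true true true false) (seq (t - (6+L))) := by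
  unfold stepFun
  rw [if_neg (by omega), if_neg (by omega), if_neg (by omega), if_neg (by omega),
    if_neg (by omega), if_neg (by omega), if_pos h2]

lemma sf7 : stepFun n L seq (7 + 2*L)
    = lift n (qs true false true false) (fun v => decide (v = none)) := by
  unfold stepFun
  rw [if_neg (by omega), if_neg (by omega), if_neg (by omega), if_neg (by omega),
    if_neg (by omega), if_neg (by omega), if_neg (by omega), if_pos rfl]

lemma sf8 : stepFun n L seq (8 + 2*L)
    = lift n (qs false false true false) (fun v => decide (v = none)) := by
  unfold stepFun
  rw [if_neg (by omega), if_neg (by omega), if_neg (by omega), if_neg (by omega),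
    if_neg (by omega), if_neg (by omega), if_neg (by omega), if_neg (by omega), if_pos rfl]

lemma sf9 {t : ℕ} (h : 9 + 2*L ≤ t) :
    stepFun n L seq t = lift n (qs false false false false) (fun v => decide (v = none)) := by
  unfold stepFun
  rw [if_neg (by omega), if_neg (by omega), if_neg (by omega), if_neg (by omega),
    if_neg (by omega), if_neg (by omega), if_neg (by omega), if_neg (by omega),
    if_neg (by omega)]

end evals

lemma ascent_aux (n : ℕ) :
    ∃ seq : ℕ → (StarVar n → Bool),
      seq 0 = (fun _ => false) ∧
      seq (10 * 2 ^ n - 9) = (fun v => decide (v = none)) ∧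
      ∀ t, t < 10 * 2 ^ n - 9 →
        Adjacent (seq t) (seq (t + 1)) ∧ starF n (seq t) < starF n (seq (t + 1)) := by
  induction n with
  | zero =>
    refine ⟨fun t => if t = 0 then (fun _ => false) else (fun v => decide (v = none)),
      by simp, by norm_num, ?_⟩
    intro t ht
    have ht0 : t = 0 := by omega
    subst ht0
    beta_reduce
    rw [if_pos rfl, if_neg (by omega : ¬ (0 + 1 = 0))]
    refine ⟨adj_FT 0, ?_⟩
    rw [starF_false, starF_true]
    positivity
  | succ n IH =>
    obtain ⟨seq, h0, hL, hstep⟩ := IH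
    set L := 10 * 2 ^ n - 9 with hLdef
    have h2 : 1 ≤ 2 ^ n := Nat.one_le_two_pow
    have hp2 : 2 ^ (n+1) = 2 * 2 ^ n := by rw [pow_succ]; ring
    have hL' : 10 * 2 ^ (n+1) - 9 = 2 * L + 9 := by omega
    have hL1 : 1 ≤ L := by omega
    have hpow : (0:ℤ) < 11 ^ n := by positivity
    -- gadget value facts
    have g0f : gval (qs false false false false) false = 0 := by decide
    have g1f : gval (qs false true false false) false = 1 := by decide
    have g2f : gval (qs false true false true) false = 2 := by decide
    have g3f : gval (qs false true true true) false = 3 := by decide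
    have g3c : ∀ b, 10 * b2i b + gval (qs false true true true) b = 3 := by decide
    have g4t : gval (qs true true true true) true = -6 := by decide
    have g4f : gval (qs true true true true) false = 6 := by decide
    have g5c : ∀ b, 10 * b2i b + gval (qs true true true false) b = 7 := by decide
    have g5t : gval (qs true true true false) true = -3 := by decide
    have g6t : gval (qs true false true false) true = -2 := by decide
    have g7t : gval (qs false false true false) true = -1 := by decide
    have g0t : gval (qs false false false false) true = 0 := by decide
    refine ⟨stepFun n L seq, ?_, ?_, ?_⟩
    · rw [sf0]
      exact lift_zero_false n _ (by decide)
    · rw [hL', sf9 n L seq (by omega)]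
      exact lift_zero_true n _ (by decide)
    · intro t ht
      rw [hL'] at ht
      have hcase : t = 0 ∨ t = 1 ∨ t = 2 ∨ (3 ≤ t ∧ t + 1 ≤ 3 + L) ∨ t = 3 + L ∨
          t = 4 + L ∨ t = 5 + L ∨ (6 + L ≤ t ∧ t + 1 ≤ 6 + 2*L) ∨ t = 6 + 2*L ∨
          t = 7 + 2*L ∨ t = 8 + 2*L := by omega
      rcases hcase with rfl | rfl | rfl | ⟨ha, hb⟩ | rfl | rfl | rfl | ⟨ha, hb⟩ | rfl | rfl | rfl
      · -- 0 → 1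
        rw [sf0, sf1]
        refine ⟨adjacent_top n _ _ _ 1 (by decide) (by decide), ?_⟩
        rw [starF_lift_false, starF_lift_false, g0f, g1f]
        linarith
      · -- 1 → 2
        rw [sf1, sf2]
        refine ⟨adjacent_top n _ _ _ 3 (by decide) (by decide), ?_⟩
        rw [starF_lift_false, starF_lift_false, g1f, g2f]
        linarith
      · -- 2 → 3
        rw [sf2, sf3 n L seq (by omega) (by omega)]
        norm_num only
        rw [h0]
        refine ⟨adjacent_top n _ _ _ 2 (by decide) (by decide), ?_⟩
        rw [starF_lift_false, starF_lift_false, g2f, g3f]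
        linarith
      · -- inner run 1
        rw [sf3 n L seq (by omega) (by omega), sf3 n L seq (by omega) hb]
        have harith : t + 1 - 3 = (t - 3) + 1 := by omega
        rw [harith]
        have hs := hstep (t - 3) (by omega)
        refine ⟨adjacent_lift n _ _ _ hs.1, ?_⟩
        rw [starF_lift_c n _ 3 g3c, starF_lift_c n _ 3 g3c]
        linarith [hs.2]
      · -- 3 + L → 4 + L
        rw [sf3 n L seq (by omega) (by omega)]
        have : 3 + L - 3 = L := by omega
        rw [this, hL]
        have : 3 + L + 1 = 4 + L := by omega
        rw [this, sf4]
        refine ⟨adjacent_top n _ _ _ 0 (by decide) (by decide), ?_⟩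
        rw [starF_lift_true, starF_lift_true, g4t]
        have : 10 + gval (qs false true true true) true = 3 := by decide
        rw [this]
        linarith
      · -- 4 + L → 5 + L
        have : 4 + L + 1 = 5 + L := by omega
        rw [sf4, this, sf5]
        refine ⟨adjacent_lift n _ _ _ (adj_TF n), ?_⟩
        rw [starF_lift_true, starF_lift_false, g4t, g4f]
        linarith
      · -- 5 + L → 6 + L
        have h6 : 5 + L + 1 = 6 + L := by omega
        rw [sf5, h6, sf6 n L seq (by omega) (by omega)]
        have : 6 + L - (6 + L) = 0 := by omega
        rw [this, h0]
        refine ⟨adjacent_top n _ _ _ 3 (by decide) (by decide), ?_⟩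
        rw [starF_lift_false, starF_lift_false, g4f]
        have : gval (qs true true true false) false = 7 := by decide
        rw [this]
        linarith
      · -- inner run 2
        rw [sf6 n L seq (by omega) (by omega), sf6 n L seq (by omega) hb]
        have harith : t + 1 - (6 + L) = (t - (6 + L)) + 1 := by omega
        rw [harith]
        have hs := hstep (t - (6 + L)) (by omega)
        refine ⟨adjacent_lift n _ _ _ hs.1, ?_⟩
        rw [starF_lift_c n _ 7 g5c, starF_lift_c n _ 7 g5c]
        linarith [hs.2]
      · -- 6 + 2L → 7 + 2L
        rw [sf6 n L seq (by omega) (by omega)]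
        have : 6 + 2*L - (6 + L) = L := by omega
        rw [this, hL]
        have : 6 + 2*L + 1 = 7 + 2*L := by omega
        rw [this, sf7]
        refine ⟨adjacent_top n _ _ _ 1 (by decide) (by decide), ?_⟩
        rw [starF_lift_true, starF_lift_true, g5t, g6t]
        linarith
      · -- 7 + 2L → 8 + 2L
        have : 7 + 2*L + 1 = 8 + 2*L := by omega
        rw [sf7, this, sf8]
        refine ⟨adjacent_top n _ _ _ 0 (by decide) (by decide), ?_⟩
        rw [starF_lift_true, starF_lift_true, g6t, g7t]
        linarith
      · -- 8 + 2L → 9 + 2L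
        rw [sf8, sf9 n L seq (by omega)]
        refine ⟨adjacent_top n _ _ _ 2 (by decide) (by decide), ?_⟩
        rw [starF_lift_true, starF_lift_true, g7t, g0t]
        linarith

theorem star_exponential_ascent (n : ℕ) (hn : 1 ≤ n) :
    ∃ seq : ℕ → (StarVar n → Bool),
      seq 0 = (fun _ => false) ∧
      seq (10 * 2 ^ n - 9) = (fun v => decide (v = none)) ∧
      ∀ t, t < 10 * 2 ^ n - 9 →
        Adjacent (seq t) (seq (t + 1)) ∧ starF n (seq t) < starF n (seq (t + 1)) := by
  exact ascent_aux n
end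

section
/- In the fitness landscape of C_{≤n}, starting from the all-zeros assignment, flipping only the centre variable 0 from 0 to 1 strictly increases the fitness by 11^n, and the resulting assignment 1(0000)^n is a local peak. -/
def IsLocalPeak {V : Type*} (f : (V → Bool) → ℤ) (x : V → Bool) : Prop :=
  ∀ y, Adjacent x y → f y ≤ f x

@[simp] lemma b2i_false : b2i false = 0 := rfl
@[simp] lemma b2i_true : b2i true = 1 := rfl

lemma term_bound (e a b c d : Bool) :
    b2i a + b2i b + 3 * b2i c + b2i d
      - 2 * b2i e * b2i a - 4 * b2i e * b2i b - 4 * b2i e * b2i c - 2 * b2i e * b2i d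
      + 2 * b2i a * b2i b - 2 * b2i c * b2i d ≤ if e then 0 else 8 := by
  cases e <;> cases a <;> cases b <;> cases c <;> cases d <;> simp [b2i]

lemma geom_bound (n : ℕ) : 8 * ∑ k : Fin n, (11:ℤ) ^ (k:ℕ) ≤ 11 ^ n := by
  rw [Fin.sum_univ_eq_sum_range]
  have h := geom_sum_mul (11:ℤ) n
  have hS : (0:ℤ) ≤ ∑ i ∈ Finset.range n, (11:ℤ) ^ i :=
    Finset.sum_nonneg fun i _ => by positivity
  nlinarith [h, hS]

lemma starF_le (n : ℕ) (y : StarVar n → Bool) : starF n y ≤ 11 ^ n := by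
  unfold starF
  have hterm : ∀ k : Fin n,
      (b2i (y (some (k, 0))) + b2i (y (some (k, 1))) + 3 * b2i (y (some (k, 2)))
        + b2i (y (some (k, 3)))
        - 2 * b2i (y none) * b2i (y (some (k, 0)))
        - 4 * b2i (y none) * b2i (y (some (k, 1)))
        - 4 * b2i (y none) * b2i (y (some (k, 2)))
        - 2 * b2i (y none) * b2i (y (some (k, 3)))
        + 2 * b2i (y (some (k, 0))) * b2i (y (some (k, 1)))
        - 2 * b2i (y (some (k, 2))) * b2i (y (some (k, 3)))) ≤
      if y none then 0 else 8 := fun k =>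
    term_bound (y none) (y (some (k, 0))) (y (some (k, 1))) (y (some (k, 2))) (y (some (k, 3)))
  have hsum : ∑ k : Fin n, 11 ^ (k : ℕ) *
      (b2i (y (some (k, 0))) + b2i (y (some (k, 1))) + 3 * b2i (y (some (k, 2)))
        + b2i (y (some (k, 3)))
        - 2 * b2i (y none) * b2i (y (some (k, 0)))
        - 4 * b2i (y none) * b2i (y (some (k, 1)))
        - 4 * b2i (y none) * b2i (y (some (k, 2)))
        - 2 * b2i (y none) * b2i (y (some (k, 3)))
        + 2 * b2i (y (some (k, 0))) * b2i (y (some (k, 1)))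
        - 2 * b2i (y (some (k, 2))) * b2i (y (some (k, 3))))
      ≤ ∑ k : Fin n, (11:ℤ) ^ (k : ℕ) * (if y none then 0 else 8) :=
    Finset.sum_le_sum fun k _ =>
      mul_le_mul_of_nonneg_left (hterm k) (by positivity)
  cases h : y none
  · simp only [h, Bool.false_eq_true, if_false] at hsum
    simp only [h, b2i_false, mul_zero, zero_add]
    calc _ ≤ ∑ k : Fin n, (11:ℤ) ^ (k:ℕ) * 8 := hsum
      _ = 8 * ∑ k : Fin n, (11:ℤ) ^ (k:ℕ) := by
          rw [Finset.mul_sum]; exact Finset.sum_congr rfl fun k _ => mul_comm _ _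
      _ ≤ 11 ^ n := geom_bound n
  · simp only [h, if_true, b2i_true, mul_one, mul_zero, Finset.sum_const_zero] at hsum
    simp only [h, b2i_true, mul_one]
    linarith

theorem star_centre_flip (n : ℕ) :
    Adjacent (fun _ : StarVar n => false) (fun v => decide (v = none)) ∧
    starF n (fun v => decide (v = none)) = starF n (fun _ => false) + 11 ^ n ∧
    IsLocalPeak (starF n) (fun v => decide (v = none)) := by
  refine ⟨⟨none, by simp, fun v hv => by simp [hv]⟩, ?_, ?_⟩
  · simp [starF, b2i]
  · intro y _
    have : starF n (fun v => decide (v = none)) = 11 ^ n := by simp [starF, b2i]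
    rw [this]
    exact starF_le n y
end
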